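/- arXiv:2206.14105 — 2 statements merged into one kernel-verified Lean document; each statement's English description precedes it below -/
import Mathlib

section
/- Let p̂ be a strictly positive probability distribution on a finite set A, and let π ∈ ℝ^{|A|} satisfy both ∑_α π_α √(p̂_α) = 0 and ∑_α π_α √(p̂_α) log p̂_α = 0. Define for t in a neighborhood of 0 the curve p(t)_α = p̂_α + t √(p̂_α) π_α (assumed to remain a probability vector). Then the function t ↦ H(p̂) − H(p(t)) has Taylor expansion (1/2) (∑_α π_α²) t² + O(t³) at t = 0; in particular its first derivative at 0 vanishes and its second derivative at 0 equals ∑_α π_α². -/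
/-! Along the line `t ↦ p̂ + t c` with `c_α = √p̂_α π_α`, each summand of the entropy deficit
is `x log x` evaluated at `p̂_α + t c_α`. Writing `log (p̂ + h) = log p̂ + log (1 + h / p̂)` reduces
its second-order Taylor expansion at `p̂_α ≠ 0` to `(1 + y) log (1 + y) = y + y² / 2 + O(y³)`. The
linear coefficient `∑ c_α (log p̂_α + 1)` vanishes by the two orthogonality conditions, and the
quadratic one is `∑ c_α² / p̂_α = ∑ π_α²`. The derivatives come from those of `x log x` and `log`,
which are available near `t = 0` because `p̂` has no zero entries. -/

open Filter Asymptotics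

/-- Shannon entropy (convention `0 log 0 = 0`). -/
noncomputable def shannonEntropy {A : Type*} [Fintype A] (q : A → ℝ) : ℝ :=
  -∑ α, q α * Real.log (q α)

section

open Real Topology

theorem log_one_add_sub_taylor_isBigO :
    (fun y : ℝ => log (1 + y) - (y - y ^ 2 / 2)) =O[𝓝 0] fun y => y ^ 3 := by
  refine IsBigO.of_bound 2 ?_
  filter_upwards [Metric.ball_mem_nhds (0 : ℝ) (by norm_num : (0 : ℝ) < 1 / 2)] with y hy
  rw [Metric.mem_ball, dist_zero_right, norm_eq_abs] at hy
  have hbound := abs_log_sub_add_sum_range_le (x := -y) (by rw [abs_neg]; linarith) 2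
  simp only [Finset.sum_range_succ, Finset.sum_range_zero, abs_neg, sub_neg_eq_add] at hbound
  rw [norm_eq_abs, norm_eq_abs, abs_pow]
  calc |log (1 + y) - (y - y ^ 2 / 2)|
      = |0 + (-y) ^ (0 + 1) / ((0 : ℕ) + 1) + (-y) ^ (1 + 1) / ((1 : ℕ) + 1) + log (1 + y)| := by
        congr 1; push_cast; ring
    _ ≤ |y| ^ (2 + 1) / (1 - |y|) := hbound
    _ ≤ |y| ^ 3 / (1 / 2) := by gcongr; linarith
    _ = 2 * |y| ^ 3 := by ring

theorem one_add_mul_log_one_add_sub_taylor_isBigO :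
    (fun y : ℝ => (1 + y) * log (1 + y) - y - y ^ 2 / 2) =O[𝓝 0] fun y => y ^ 3 := by
  have hbounded : (fun y : ℝ => 1 + y) =O[𝓝 0] fun _ => (1 : ℝ) :=
    ((continuous_const.add continuous_id).tendsto' 0 1 (by norm_num)).isBigO_one ℝ
  have hprod := ((hbounded.mul log_one_add_sub_taylor_isBigO).congr_right fun y => one_mul _).add
    (isBigO_const_mul_self (-1 / 2 : ℝ) (fun y : ℝ => y ^ 3) _)
  exact hprod.congr_left fun y => by ring

theorem mul_log_add_sub_taylor_isBigO {q : ℝ} (hq : q ≠ 0) :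
    (fun h : ℝ => (q + h) * log (q + h) - q * log q - h * (log q + 1) - h ^ 2 / (2 * q))
      =O[𝓝 0] fun h => h ^ 3 := by
  have hscale : Tendsto (fun h : ℝ => h / q) (𝓝 0) (𝓝 0) := by
    simpa using (continuous_id.div_const q).tendsto 0
  have hcomp := (one_add_mul_log_one_add_sub_taylor_isBigO.comp_tendsto hscale).const_mul_left q
  have hne : ∀ᶠ h in 𝓝 (0 : ℝ), 1 + h / q ≠ 0 :=
    ((continuous_const.add (continuous_id.div_const q)).tendsto 0).eventually_ne (by simp)
  refine (hcomp.congr' ?_ (Eventually.of_forall fun h => ?_)).trans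
    (isBigO_const_mul_self (q ^ 3)⁻¹ _ _)
  · filter_upwards [hne] with h hh
    have hfac : q + h = q * (1 + h / q) := by field_simp
    simp only [Function.comp_apply]
    rw [hfac, log_mul hq hh]
    field_simp
    ring
  · simp only [Function.comp_apply]
    field_simp

variable {A : Type*} [Fintype A] (q c : A → ℝ)

noncomputable def entropyDeficit (t : ℝ) : ℝ :=
  shannonEntropy q - shannonEntropy (fun α => q α + t * c α)

theorem entropyDeficit_sub_taylor_isBigO (hq : ∀ α, q α ≠ 0) :
    (fun t => entropyDeficit q c t - t * ∑ α, c α * (log (q α) + 1)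
        - t ^ 2 / 2 * ∑ α, c α ^ 2 / q α)
      =O[𝓝 0] fun t => t ^ 3 := by
  have hcoord : ∀ α ∈ Finset.univ, (fun t => (q α + t * c α) * log (q α + t * c α)
      - q α * log (q α) - t * c α * (log (q α) + 1) - (t * c α) ^ 2 / (2 * q α))
      =O[𝓝 0] fun t => t ^ 3 := fun α _ => by
    have hline : Tendsto (fun t : ℝ => t * c α) (𝓝 0) (𝓝 0) := by
      simpa using (continuous_id.mul_const (c α)).tendsto 0
    refine ((mul_log_add_sub_taylor_isBigO (hq α)).comp_tendsto hline).trans ?_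
    simpa only [Function.comp_def, mul_pow, mul_comm _ (c α ^ 3)] using
      isBigO_const_mul_self (c α ^ 3) (fun t : ℝ => t ^ 3) _
  refine (IsBigO.fun_sum hcoord).congr_left fun t => ?_
  simp only [entropyDeficit, shannonEntropy, Finset.mul_sum, ← Finset.sum_neg_distrib,
    ← Finset.sum_sub_distrib]
  exact Finset.sum_congr rfl fun α _ => by ring

theorem hasDerivAt_entropyDeficit {t : ℝ} (h : ∀ α, q α + t * c α ≠ 0) :
    HasDerivAt (entropyDeficit q c) (∑ α, c α * (log (q α + t * c α) + 1)) t := by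
  unfold entropyDeficit shannonEntropy
  refine (HasDerivAt.neg (HasDerivAt.fun_sum fun α _ => ?_)).const_sub _ |>.congr_deriv
    (neg_neg _)
  have hline : HasDerivAt (fun s => q α + s * c α) (c α) t :=
    (hasDerivAt_mul_const (c α)).const_add (q α)
  simpa only [Function.comp_def, mul_comm (c α)] using (hasDerivAt_mul_log (h α)).comp t hline

theorem hasDerivAt_sum_mul_log_add_one {t : ℝ} (h : ∀ α, q α + t * c α ≠ 0) :
    HasDerivAt (fun s => ∑ α, c α * (log (q α + s * c α) + 1))
      (∑ α, c α ^ 2 / (q α + t * c α)) t := by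
  refine HasDerivAt.fun_sum fun α _ => ?_
  have hline : HasDerivAt (fun s => q α + s * c α) (c α) t :=
    (hasDerivAt_mul_const (c α)).const_add (q α)
  exact (((hline.log (h α)).add_const 1).const_mul (c α)).congr_deriv (by ring)

theorem eventually_forall_add_mul_ne_zero (hq : ∀ α, q α ≠ 0) :
    ∀ᶠ t in 𝓝 (0 : ℝ), ∀ α, q α + t * c α ≠ 0 :=
  eventually_all.2 fun α =>
    ((continuous_const.add (continuous_id.mul continuous_const)).tendsto 0).eventually_ne
      (by simpa using hq α)

theorem deriv_entropyDeficit_zero (hq : ∀ α, q α ≠ 0) :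
    deriv (entropyDeficit q c) 0 = ∑ α, c α * (log (q α) + 1) := by
  simpa using (hasDerivAt_entropyDeficit q c (t := 0) (by simpa using hq)).deriv

theorem deriv_deriv_entropyDeficit_zero (hq : ∀ α, q α ≠ 0) :
    deriv (deriv (entropyDeficit q c)) 0 = ∑ α, c α ^ 2 / q α := by
  have hderiv : deriv (entropyDeficit q c) =ᶠ[𝓝 0]
      fun t => ∑ α, c α * (log (q α + t * c α) + 1) := by
    filter_upwards [eventually_forall_add_mul_ne_zero q c hq] with t ht
    exact (hasDerivAt_entropyDeficit q c ht).deriv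
  rw [hderiv.deriv_eq]
  simpa using (hasDerivAt_sum_mul_log_add_one q c (t := 0) (by simpa using hq)).deriv

end

theorem entropy_fluctuation_quadratic_general
    {A : Type*} [Fintype A]
    (phat : A → ℝ) (hpos : ∀ α, 0 < phat α)
    (π : A → ℝ)
    (horth1 : ∑ α, π α * Real.sqrt (phat α) = 0)
    (horth2 : ∑ α, π α * Real.sqrt (phat α) * Real.log (phat α) = 0)
    (p : ℝ → A → ℝ)
    (hp : ∀ t α, p t α = phat α + t * Real.sqrt (phat α) * π α) :
    (fun t => (shannonEntropy phat - shannonEntropy (p t))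
        - (1 / 2) * (∑ α, (π α) ^ 2) * t ^ 2) =O[nhds 0] (fun t => |t| ^ 3) ∧
    deriv (fun t => shannonEntropy phat - shannonEntropy (p t)) 0 = 0 ∧
    deriv (deriv (fun t => shannonEntropy phat - shannonEntropy (p t))) 0
      = ∑ α, (π α) ^ 2 := by
  set c : A → ℝ := fun α => Real.sqrt (phat α) * π α with hc
  have hq : ∀ α, phat α ≠ 0 := fun α => (hpos α).ne'
  obtain rfl : p = fun t α => phat α + t * c α := funext₂ fun t α => by rw [hp, hc, mul_assoc]
  have hlin : ∑ α, c α * (Real.log (phat α) + 1) = 0 :=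
    calc ∑ α, c α * (Real.log (phat α) + 1)
        = ∑ α, π α * Real.sqrt (phat α) * Real.log (phat α) + ∑ α, π α * Real.sqrt (phat α) := by
          rw [← Finset.sum_add_distrib]
          exact Finset.sum_congr rfl fun α _ => by rw [hc]; ring
      _ = 0 := by rw [horth1, horth2, add_zero]
  have hquad : ∑ α, c α ^ 2 / phat α = ∑ α, π α ^ 2 := Finset.sum_congr rfl fun α _ => by
    rw [hc, mul_pow, Real.sq_sqrt (hpos α).le, mul_div_cancel_left₀ _ (hq α)]
  refine ⟨?_, ?_, ?_⟩
  · have htaylor := entropyDeficit_sub_taylor_isBigO phat c hq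
    rw [hlin, hquad] at htaylor
    simp only [← abs_pow, isBigO_abs_right]
    exact htaylor.congr_left fun t => by rw [entropyDeficit]; ring
  · exact (deriv_entropyDeficit_zero phat c hq).trans hlin
  · exact (deriv_deriv_entropyDeficit_zero phat c hq).trans hquad

/-- Lemma on fluctuations: for a strictly positive probability
distribution `p̂` and fluctuations `π` orthogonal to `√p̂` and to `√p̂ · log p̂`,
the entropy deficit along the curve `p(t)_α = p̂_α + t √(p̂_α) π_α` has the Taylor
expansion `(1/2)(∑ π²) t² + O(t³)`: its first derivative at `0` vanishes and its
second derivative at `0` equals `∑ π²`. -/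
theorem entropy_fluctuation_quadratic
    {A : Type*} [Fintype A]
    (phat : A → ℝ) (hpos : ∀ α, 0 < phat α) (hsum : ∑ α, phat α = 1)
    (π : A → ℝ)
    (horth1 : ∑ α, π α * Real.sqrt (phat α) = 0)
    (horth2 : ∑ α, π α * Real.sqrt (phat α) * Real.log (phat α) = 0)
    (p : ℝ → A → ℝ)
    (hp : ∀ t α, p t α = phat α + t * Real.sqrt (phat α) * π α)
    (hprob : ∃ ε > 0, ∀ t : ℝ, |t| < ε → ∀ α, 0 < p t α) :
    (fun t => (shannonEntropy phat - shannonEntropy (p t))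
        - (1 / 2) * (∑ α, (π α) ^ 2) * t ^ 2) =O[nhds 0] (fun t => |t| ^ 3) ∧
    deriv (fun t => shannonEntropy phat - shannonEntropy (p t)) 0 = 0 ∧
    deriv (deriv (fun t => shannonEntropy phat - shannonEntropy (p t))) 0
      = ∑ α, (π α) ^ 2 :=
  entropy_fluctuation_quadratic_general phat hpos π horth1 horth2 p hp
end

section
/- For a sequence p^(N) of probability distributions on a finite set A with N p^(N)_α ∈ ℕ for all α and p^(N) → p with p_α > 0 for all α, the multinomial coefficient W[N p^(N)] = N! / ∏_α (N p^(N)_α)! satisfies log W[N p^(N)] = N H(p^(N)) − ((|A|−1)/2) log N + O(1) as N → ∞, where H is Shannon entropy. -/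
open Filter Asymptotics

/-! By Stirling's formula `log n! = n log n - n + ½ log n + log √(2π) + o(1)`. Applied to `N!`
and to each `(N p_α)!`, the terms `n log n` produce `N H(p^(N))`, the linear terms cancel because
the counts sum to `N`, and the half-logarithms leave `-((|A| - 1)/2) log N - ½ ∑ log p^(N)_α`.
What remains converges, since every count tends to infinity and `p^(N)_α → p_α > 0`. -/

open Real Finset

noncomputable def stirlingRemainder (n : ℕ) : ℝ :=
  log n.factorial - (n * log n - n + log n / 2)

lemma stirlingRemainder_eq_log_stirlingSeq {n : ℕ} (hn : n ≠ 0) :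
    stirlingRemainder n = log (Stirling.stirlingSeq n) + log 2 / 2 := by
  have hn' : (n : ℝ) ≠ 0 := by exact_mod_cast hn
  rw [Stirling.log_stirlingSeq_formula, stirlingRemainder, log_mul two_ne_zero hn',
    log_div hn' (exp_ne_zero 1), log_exp]
  ring

lemma tendsto_stirlingRemainder :
    Tendsto stirlingRemainder atTop (nhds (log √(2 * π))) := by
  have hlim : log √(2 * π) = log √π + log 2 / 2 := by
    rw [log_sqrt (by positivity), log_sqrt pi_pos.le, log_mul two_ne_zero pi_ne_zero]
    ring
  rw [hlim]
  refine ((Stirling.tendsto_stirlingSeq_sqrt_pi.log (by positivity)).add_const _).congr' ?_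
  filter_upwards [eventually_ne_atTop 0] with n hn
  exact (stirlingRemainder_eq_log_stirlingSeq hn).symm

lemma sum_mul_shannonEntropy_div_sum {A : Type*} [Fintype A] {q : A → ℝ}
    (hq : ∀ α, 0 ≤ q α) :
    (∑ α, q α) * shannonEntropy (fun α => q α / ∑ β, q β)
      = (∑ α, q α) * log (∑ α, q α) - ∑ α, q α * log (q α) := by
  set s := ∑ α, q α
  by_cases hs : s = 0
  · have hq0 : ∀ α, q α = 0 := fun α =>
      (sum_eq_zero_iff_of_nonneg fun β _ => hq β).mp hs α (mem_univ α)
    simp [s, hq0]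
  have hterm : ∀ α, s * (q α / s * log (q α / s)) = q α * log (q α) - q α * log s := by
    intro α
    by_cases hq : q α = 0
    · simp [hq]
    · rw [log_div hq hs]
      field_simp
  rw [shannonEntropy, mul_neg, mul_sum, sum_congr rfl fun α _ => hterm α, sum_sub_distrib,
    ← sum_mul]
  ring

lemma log_factorial_div_prod_factorial {A : Type*} [Fintype A] (c : A → ℕ) {n : ℕ}
    (hc : ∀ α, c α ≠ 0) (hn : ∑ α, c α = n) :
    log ((n.factorial : ℝ) / ∏ α, ((c α).factorial : ℝ))
      = n * shannonEntropy (fun α => (c α : ℝ) / n) - ((Fintype.card A - 1 : ℝ) / 2) * log n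
        + (stirlingRemainder n - ∑ α, stirlingRemainder (c α)
          - (∑ α, log ((c α : ℝ) / n)) / 2) := by
  have hsum : ∑ α, (c α : ℝ) = n := by exact_mod_cast hn
  have hlog_div : ∀ α, log ((c α : ℝ) / n) = log (c α) - log n := fun α => by
    have hcα := hc α
    have hle : c α ≤ n := hn ▸ single_le_sum (fun β _ => Nat.zero_le (c β)) (mem_univ α)
    exact log_div (by exact_mod_cast hcα) (by norm_cast; omega)
  have hentropy := sum_mul_shannonEntropy_div_sum fun α => (c α).cast_nonneg
  rw [hsum] at hentropy
  have hlog_prod : log (∏ α, ((c α).factorial : ℝ)) = ∑ α, log ((c α).factorial : ℝ) :=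
    log_prod fun α _ => by exact_mod_cast (c α).factorial_ne_zero
  rw [log_div (by exact_mod_cast n.factorial_ne_zero)
      (prod_ne_zero_iff.mpr fun α _ => by exact_mod_cast (c α).factorial_ne_zero),
    hlog_prod, hentropy]
  simp only [stirlingRemainder, hlog_div, sum_sub_distrib, sum_add_distrib, ← sum_div, hsum,
    sum_const, card_univ, nsmul_eq_mul]
  ring

lemma tendsto_atTop_of_tendsto_div_natCast {u : ℕ → ℕ} {a : ℝ} (ha : 0 < a)
    (hu : Tendsto (fun N => (u N : ℝ) / N) atTop (nhds a)) : Tendsto u atTop atTop := by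
  refine tendsto_natCast_atTop_iff.mp <|
    (hu.pos_mul_atTop ha tendsto_natCast_atTop_atTop).congr' ?_
  filter_upwards [eventually_ne_atTop 0] with N hN
  field_simp

/-- For a sequence of empirical distributions `p^(N)_α = c_N(α)/N`
with integer counts `c_N` summing to `N`, converging to a strictly positive limit
`p`, the multinomial coefficient `W[N p^(N)] = N! / ∏_α (N p^(N)_α)!` satisfies
`log W[N p^(N)] = N H(p^(N)) − ((|A|−1)/2) log N + O(1)` as `N → ∞`. -/
theorem multinomial_coefficient_large_N
    {A : Type*} [Fintype A]
    (c : ℕ → A → ℕ) (hc : ∀ N, ∑ α, c N α = N)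
    (p : ℕ → A → ℝ) (hp : ∀ N α, p N α = (c N α : ℝ) / (N : ℝ))
    (plim : A → ℝ) (hpos : ∀ α, 0 < plim α)
    (hlim : ∀ α, Tendsto (fun N => p N α) atTop (nhds (plim α))) :
    (fun N : ℕ =>
        Real.log ((N.factorial : ℝ) / ∏ α, ((c N α).factorial : ℝ))
          - ((N : ℝ) * shannonEntropy (p N)
              - ((Fintype.card A - 1 : ℝ) / 2) * Real.log (N : ℝ)))
      =O[atTop] (fun _ => (1 : ℝ)) := by
  have hp' : ∀ N, p N = fun α => (c N α : ℝ) / N := fun N => funext (hp N)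
  have hcount : ∀ α, Tendsto (c · α) atTop atTop := fun α =>
    tendsto_atTop_of_tendsto_div_natCast (hpos α) (by simpa only [hp] using hlim α)
  have hremainder : Tendsto (fun N => stirlingRemainder N - ∑ α, stirlingRemainder (c N α)
      - (∑ α, log (p N α)) / 2) atTop
      (nhds (log √(2 * π) - ∑ _α : A, log √(2 * π) - (∑ α, log (plim α)) / 2)) :=
    (tendsto_stirlingRemainder.sub (tendsto_finsetSum _ fun α _ =>
      tendsto_stirlingRemainder.comp (hcount α))).sub
      ((tendsto_finsetSum _ fun α _ => (hlim α).log (hpos α).ne').div_const 2)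
  refine (hremainder.isBigO_one ℝ).congr' ?_ EventuallyEq.rfl
  have hnonzero : ∀ᶠ N in atTop, ∀ α, c N α ≠ 0 :=
    eventually_all.mpr fun α => (hcount α).eventually_ne_atTop 0
  filter_upwards [hnonzero] with N hN
  rw [log_factorial_div_prod_factorial (c N) hN (hc N), hp']
  ring
end
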